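/- arXiv:2307.09849 — 6 statements merged into one kernel-verified Lean document; each statement's English description precedes it below -/
import Mathlib

section
/- Let A be a complex Banach *-algebra with identity and let a ∈ A. If a is *-DMP (i.e., there exists n ≥ 1 such that aⁿ has both a Moore–Penrose inverse and a group inverse and (aⁿ)† = (aⁿ)#), then a is Drazin invertible and the spectral idempotent a^π = 1 − a a^D is a projection (i.e., (a^π)² = a^π = (a^π)*). -/
/-- Moore–Penrose inverse. -/
def IsMP {A : Type*} [Ring A] [StarRing A] (a x : A) : Prop :=
  a * x * a = a ∧ x * a * x = x ∧ star (a * x) = a * x ∧ star (x * a) = x * a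

/-- Group inverse. -/
def IsGroupInv {A : Type*} [Ring A] (a x : A) : Prop :=
  a * x * a = a ∧ x * a * x = x ∧ a * x = x * a

/-- `a` is *-DMP: some power `a ^ n` (`n ≥ 1`) has a common Moore–Penrose and group inverse. -/
def IsStarDMP {A : Type*} [Ring A] [StarRing A] (a : A) : Prop :=
  ∃ n : ℕ, 1 ≤ n ∧ ∃ x : A, IsMP (a ^ n) x ∧ IsGroupInv (a ^ n) x

/-- `x` is the Drazin inverse of `a` (with some index `k`). -/
def IsDrazin {A : Type*} [Ring A] (a x : A) : Prop :=
  ∃ k : ℕ, x * a ^ (k + 1) = a ^ k ∧ a * x ^ 2 = x ∧ a * x = x * a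

/-- `x` is the pseudo core inverse of `a`. -/
def IsPCore {A : Type*} [Ring A] [StarRing A] (a x : A) : Prop :=
  ∃ k : ℕ, x * a ^ (k + 1) = a ^ k ∧ a * x ^ 2 = x ∧ star (a * x) = a * x

/-- EP element: common group and Moore–Penrose inverse. -/
def IsEP {A : Type*} [Ring A] [StarRing A] (a : A) : Prop :=
  ∃ x : A, IsMP a x ∧ IsGroupInv a x

/-!
If `b = a ^ n` has a group inverse `x`, then `a ^ (n - 1) * x` is a Drazin inverse of `a`: the
only non-formal point is that `x` commutes with `a`, because a group inverse commutes with
everything that commutes with `b`. For this Drazin inverse `a * a^D = b * x`, and when `x` is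
also the Moore–Penrose inverse of `b`, `b * x` is a self-adjoint idempotent, hence so is
`a^π = 1 - b * x`.
-/

theorem IsMP.isStarProjection_mul {R : Type*} [Ring R] [StarRing R] {a x : R}
    (h : IsMP a x) : IsStarProjection (a * x) :=
  isStarProjection_iff'.mpr ⟨by rw [← mul_assoc, h.1], h.2.2.1⟩

namespace IsGroupInv

variable {R : Type*} [Ring R] {b x : R}

theorem mul_mul_self (h : IsGroupInv b x) : b * x * x = x := by
  rw [h.2.2, h.2.1]

theorem commute_of_commute (h : IsGroupInv b x) {c : R} (hc : Commute c b) :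
    Commute c x := by
  have hbxx := h.mul_mul_self
  obtain ⟨hbxb, hxbx, hbx⟩ := h
  -- both sides of `hp` equal `(b * x) * c * (b * x)`
  have hp : c * (b * x) = b * x * c := by
    have hleft : c * (b * x) = b * x * c * (b * x) :=
      calc c * (b * x) = b * c * x := by rw [← mul_assoc, hc.eq]
        _ = b * x * b * c * x := by rw [hbxb]
        _ = b * x * c * (b * x) := by rw [mul_assoc (b * x) b c, ← hc.eq]; simp only [mul_assoc]
    have hright : b * x * c = b * x * c * (b * x) :=
      calc b * x * c = x * (c * b) := by rw [hbx, hc.eq, mul_assoc]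
        _ = x * (c * (b * x * b)) := by rw [hbxb]
        _ = x * (c * b) * (x * b) := by simp only [mul_assoc]
        _ = b * x * c * (b * x) := by rw [hc.eq, hbx]; simp only [mul_assoc]
    rw [hleft, ← hright]
  have hxc : x * c = x * b * c * x :=
    calc x * c = x * (b * x * c) := by rw [← mul_assoc, ← mul_assoc, hxbx]
      _ = x * (c * b) * x := by rw [← hp]; simp only [mul_assoc]
      _ = x * b * c * x := by rw [hc.eq]; simp only [mul_assoc]
  calc c * x = c * (b * x) * x := by rw [mul_assoc, hbxx]
    _ = x * c := by rw [hp, hbx, hxc]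

theorem isDrazin_pow_mul {a : R} {m : ℕ} (h : IsGroupInv (a ^ (m + 1)) x) :
    IsDrazin a (a ^ m * x) := by
  have hax : Commute a x := h.commute_of_commute (Commute.self_pow a (m + 1))
  refine ⟨m + 1, ?_, ?_, ((Commute.self_pow a m).mul_right hax).eq⟩
  · calc a ^ m * x * a ^ (m + 1 + 1) = a ^ m * a * x * a ^ (m + 1) := by
          rw [pow_succ' a (m + 1), mul_assoc (a ^ m) x, ← mul_assoc x, ← hax.eq]
          simp only [mul_assoc]
      _ = a ^ (m + 1) := by rw [← pow_succ, h.1]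
  · have hcomm : Commute (a ^ (m + 1) * x) (a ^ m) :=
      (Commute.pow_pow_self a (m + 1) m).mul_left (hax.pow_left m).symm
    calc a * (a ^ m * x) ^ 2 = a ^ (m + 1) * x * (a ^ m * x) := by
          rw [sq, ← mul_assoc, ← mul_assoc a, ← pow_succ']
      _ = a ^ m * (a ^ (m + 1) * x * x) := by rw [← mul_assoc, hcomm.eq, mul_assoc]
      _ = a ^ m * x := by rw [h.mul_mul_self]

end IsGroupInv

variable {A : Type*} [NormedRing A] [StarRing A] [NormedAlgebra ℂ A] [CompleteSpace A]

theorem stmt0 (a : A) (h : IsStarDMP a) :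
    ∃ aD : A, IsDrazin a aD ∧
      (1 - a * aD) * (1 - a * aD) = 1 - a * aD ∧ star (1 - a * aD) = 1 - a * aD := by
  obtain ⟨_ | m, hn, x, hmp, hg⟩ := h
  · omega
  have hproj : a * (a ^ m * x) = a ^ (m + 1) * x := by rw [← mul_assoc, ← pow_succ']
  exact ⟨a ^ m * x, hg.isDrazin_pow_mul,
    hproj ▸ isStarProjection_iff'.mp hmp.isStarProjection_mul.one_sub⟩
end

section
/- Let A be a complex Banach *-algebra with identity and let a ∈ A. Then a is *-DMP if and only if there exists a projection e ∈ A such that a e = e a, a + e is invertible in A, and a e is nilpotent. -/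
/-! If `x = (aⁿ)† = (aⁿ)#`, then `e = 1 - aⁿx` is a projection commuting with `a` (a group
inverse commutes with everything that commutes with its element) and `aⁿe = 0`, so `a e` is
nilpotent and `(a + e)(x aⁿ⁻¹ + e) = 1 + a e` is a unit. Conversely, `p = 1 - e` satisfies
`(a + e)ⁿ p = aⁿ p = aⁿ`, so `(a + e)⁻ⁿ p` is both the Moore–Penrose and the group inverse of `aⁿ`. -/

section Ring

variable {R : Type*} [Ring R]

theorem IsGroupInv.commute_of_commute_s2 {b x c : R} (h : IsGroupInv b x) (hc : Commute c b) :
    Commute c x := by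
  obtain ⟨hbxb, hxbx, hbx⟩ := h
  have hbbx : b * (x * x) = x := by rw [← mul_assoc, hbx, hxbx]
  have hxxb : x * x * b = x := by rw [mul_assoc, ← hbx, ← mul_assoc, hxbx]
  have hl (y : R) : b * (x * (b * y)) = b * y := by
    rw [← mul_assoc x, ← mul_assoc, ← mul_assoc b x b, hbxb]
  have hr (y : R) : y * b * x * b = y * b := by rw [mul_assoc y, mul_assoc, hbxb]
  calc c * x = b * (x * (b * (c * (x * x)))) := by rw [hl, ← hc.left_comm, hbbx]
    _ = x * c * x * b := by
      rw [← hc.left_comm, hbbx, ← mul_assoc, hbx, mul_assoc, ← hc.left_comm, hbx]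
      simp only [mul_assoc]
    _ = x * c := by nth_rw 1 [← hxxb]; rw [← hc.right_comm, hr, hc.right_comm, hxxb]

theorem Commute.mul_pow_succ_of_isIdempotentElem {c p : R} (h : Commute c p)
    (hp : IsIdempotentElem p) (n : ℕ) : (c * p) ^ (n + 1) = c ^ (n + 1) * p := by
  rw [h.mul_pow, hp.pow_succ_eq]

theorem isUnit_add_of_mul_eq_one_sub {a e y : R} (he : IsIdempotentElem e) (hae : Commute a e)
    (hnil : IsNilpotent (a * e)) (hay : Commute a y) (hey : e * y = 0) (hye : y * e = 0)
    (hy : a * y = 1 - e) : IsUnit (a + e) := by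
  have hprod : (a + e) * (y + e) = 1 + a * e := by
    rw [add_mul, mul_add, mul_add, hy, hey, he.eq]; abel
  have hey' : Commute e y := hey.trans hye.symm
  have hcomm : Commute (a + e) (y + e) :=
    (hay.add_right hae).add_left (hey'.add_right (Commute.refl e))
  exact (hcomm.isUnit_mul_iff.mp (hprod ▸ hnil.isUnit_one_add)).1

end Ring

section StarRing

variable {R : Type*} [Ring R] [StarRing R]

theorem IsMP.isStarProjection_mul_s2 {b x : R} (h : IsMP b x) : IsStarProjection (b * x) where
  isIdempotentElem := by rw [IsIdempotentElem, ← mul_assoc, h.1]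
  isSelfAdjoint := h.2.2.1

theorem isMP_isGroupInv_of_mul_eq {b x p : R} (hp : IsStarProjection p) (hbx : b * x = p)
    (hxb : x * b = p) (hbp : b * p = b) (hxp : x * p = x) : IsMP b x ∧ IsGroupInv b x := by
  have h1 : b * x * b = b := by rw [mul_assoc, hxb, hbp]
  have h2 : x * b * x = x := by rw [mul_assoc, hbx, hxp]
  have hsa : IsSelfAdjoint p := hp.isSelfAdjoint
  exact ⟨⟨h1, h2, hbx ▸ hsa, hxb ▸ hsa⟩, h1, h2, hbx.trans hxb.symm⟩

theorem exists_isStarProjection_of_isMP_isGroupInv_pow {a x : R} {m : ℕ}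
    (hmp : IsMP (a ^ (m + 1)) x) (hg : IsGroupInv (a ^ (m + 1)) x) :
    ∃ e, IsStarProjection e ∧ Commute a e ∧ IsUnit (a + e) ∧ IsNilpotent (a * e) := by
  set b := a ^ (m + 1)
  have hax : Commute a x := hg.commute_of_commute_s2 (Commute.self_pow a _)
  have he : IsStarProjection (1 - b * x) := hmp.isStarProjection_mul_s2.one_sub
  have hae : Commute a (1 - b * x) :=
    (Commute.one_right a).sub_right ((Commute.self_pow a _).mul_right hax)
  have hbe : b * (1 - b * x) = 0 := by rw [mul_sub, mul_one, hg.2.2, ← mul_assoc, hg.1, sub_self]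
  have hex : (1 - b * x) * x = 0 := by rw [sub_mul, one_mul, hg.2.2, hg.2.1, sub_self]
  have hxe : x * (1 - b * x) = 0 := by rw [mul_sub, mul_one, ← mul_assoc, hg.2.1, sub_self]
  have hnil : IsNilpotent (a * (1 - b * x)) :=
    ⟨m + 1, by rw [hae.mul_pow_succ_of_isIdempotentElem he.isIdempotentElem, hbe]⟩
  refine ⟨1 - b * x, he, hae, ?_, hnil⟩
  refine isUnit_add_of_mul_eq_one_sub he.isIdempotentElem hae hnil
    (hax.mul_right (Commute.self_pow a m)) ?_ ?_ ?_
  · rw [← mul_assoc, hex, zero_mul]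
  · rw [mul_assoc, (hae.pow_left m).eq, ← mul_assoc, hxe, zero_mul]
  · rw [sub_sub_cancel, ← mul_assoc, hax.eq, mul_assoc, ← pow_succ', hg.2.2]

theorem exists_isMP_isGroupInv_pow_of_isStarProjection {a e : R} (he : IsStarProjection e)
    (hae : Commute a e) (hu : IsUnit (a + e)) {m : ℕ} (hm : (a * e) ^ (m + 1) = 0) :
    ∃ x, IsMP (a ^ (m + 1)) x ∧ IsGroupInv (a ^ (m + 1)) x := by
  set b := a ^ (m + 1)
  set p := 1 - e
  have hp : IsStarProjection p := he.one_sub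
  have hap : Commute a p := (Commute.one_right a).sub_right hae
  let u := hu.unit ^ (m + 1)
  have hbu : Commute b ↑u⁻¹ := by
    refine Commute.units_inv_right ?_
    simpa [u] using ((Commute.refl a).add_right hae).pow_pow (m + 1) (m + 1)
  have hbp : b * p = b := by
    rw [mul_sub, mul_one, ← hae.mul_pow_succ_of_isIdempotentElem he.isIdempotentElem, hm,
      sub_zero]
  have hup : (u : R) * p = b * p := by
    have hep : Commute e p := (Commute.one_right e).sub_right (Commute.refl e)
    have hsum : (a + e) * p = a * p := by rw [add_mul, he.mul_one_sub_self, add_zero]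
    simp only [u, Units.val_pow_eq_pow_val, IsUnit.unit_spec]
    rw [← (hap.add_left hep).mul_pow_succ_of_isIdempotentElem hp.isIdempotentElem, hsum,
      hap.mul_pow_succ_of_isIdempotentElem hp.isIdempotentElem]
  have hbx : b * (↑u⁻¹ * p) = p := by
    rw [hbu.left_comm, ← hup, Units.inv_mul_cancel_left]
  refine ⟨↑u⁻¹ * p, isMP_isGroupInv_of_mul_eq hp hbx ?_ hbp ?_⟩
  · rw [mul_assoc, ← (hap.pow_left (m + 1)).eq, ← hbu.left_comm, hbx]
  · rw [mul_assoc, hp.isIdempotentElem.eq]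

theorem isStarDMP_iff_exists_isStarProjection (a : R) :
    IsStarDMP a ↔ ∃ e : R, IsStarProjection e ∧ Commute a e ∧ IsUnit (a + e) ∧
      IsNilpotent (a * e) := by
  constructor
  · rintro ⟨n, hn, x, hmp, hg⟩
    obtain ⟨m, rfl⟩ := Nat.exists_eq_add_of_le' hn
    exact exists_isStarProjection_of_isMP_isGroupInv_pow hmp hg
  · rintro ⟨e, he, hae, hu, m, hm⟩
    exact ⟨m + 1, m.succ_pos, exists_isMP_isGroupInv_pow_of_isStarProjection he hae hu
      (by rw [pow_succ, hm, zero_mul])⟩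

end StarRing

variable {A : Type*} [NormedRing A] [StarRing A] [NormedAlgebra ℂ A] [CompleteSpace A]

theorem stmt2 (a : A) :
    IsStarDMP a ↔ ∃ e : A, (e * e = e ∧ star e = e) ∧ a * e = e * a ∧
      IsUnit (a + e) ∧ IsNilpotent (a * e) := by
  rw [isStarDMP_iff_exists_isStarProjection]
  exact exists_congr fun e => and_congr_left' (isStarProjection_iff e)
end

section
/- Let A be a complex Banach *-algebra with identity, and let a, b ∈ A be *-DMP elements. If ab = ba = 0 and a* b = 0, then a + b is *-DMP. -/
/-!
Since `IsStarDMP a` says exactly that some power `a ^ n` is EP, it suffices that EP elements are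
closed under powers and under sums of orthogonal elements. With `N = n * m`, the elements
`a ^ N = (a ^ n) ^ m` and `b ^ N = (b ^ m) ^ n` are EP, satisfy `a ^ N * b ^ N = b ^ N * a ^ N = 0`,
and `(a + b) ^ N = a ^ N + b ^ N`.
-/

section Ring

variable {R : Type*} [Ring R]

theorem pow_mul_pow_eq_zero_of_mul_eq_zero {a b : R} (hab : a * b = 0) {m n : ℕ}
    (hm : 0 < m) (hn : 0 < n) : a ^ m * b ^ n = 0 := by
  obtain ⟨k, rfl⟩ := Nat.exists_eq_add_one_of_ne_zero hm.ne'
  obtain ⟨l, rfl⟩ := Nat.exists_eq_add_one_of_ne_zero hn.ne'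
  rw [pow_succ, pow_succ', mul_assoc, ← mul_assoc a, hab, zero_mul, mul_zero]

theorem add_pow_of_mul_eq_zero {a b : R} (hab : a * b = 0) (hba : b * a = 0) {n : ℕ}
    (hn : 0 < n) : (a + b) ^ n = a ^ n + b ^ n := by
  induction n, hn using Nat.le_induction with
  | base => simp
  | succ n hn ih =>
    have hanb : a ^ n * b = 0 := by
      simpa using pow_mul_pow_eq_zero_of_mul_eq_zero hab hn one_pos
    have hbna : b ^ n * a = 0 := by
      simpa using pow_mul_pow_eq_zero_of_mul_eq_zero hba hn one_pos
    rw [pow_succ, ih, add_mul, mul_add, mul_add, hanb, hbna, add_zero, zero_add, ← pow_succ,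
      ← pow_succ]

namespace IsGroupInv

variable {a x p u q v : R}

theorem commute (h : IsGroupInv a x) : Commute a x := h.2.2

theorem pow (h : IsGroupInv a x) (m : ℕ) : IsGroupInv (a ^ m) (x ^ m) := by
  obtain ⟨h₁, h₂, hc⟩ := h
  have hc : Commute a x := hc
  refine ⟨?_, ?_, (hc.pow_pow m m).eq⟩
  · rw [← hc.mul_pow, ← ((Commute.refl a).mul_left hc.symm).mul_pow, h₁]
  · rw [← hc.symm.mul_pow, ← ((Commute.refl x).mul_left hc).mul_pow, h₂]

/-- `u = u * u * p`, so `u` inherits every right annihilator of `p`. -/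
theorem inv_mul_eq_zero (h : IsGroupInv p u) (hpq : p * q = 0) : u * q = 0 := by
  have hu : u * u * p = u := by rw [mul_assoc, ← h.2.2, ← mul_assoc, h.2.1]
  rw [← hu, mul_assoc, hpq, mul_zero]

/-- `u = p * u * u`, so `u` inherits every left annihilator of `p`. -/
theorem mul_inv_eq_zero (h : IsGroupInv p u) (hqp : q * p = 0) : q * u = 0 := by
  have hu : p * u * u = u := by rw [h.2.2, h.2.1]
  rw [← hu, ← mul_assoc, ← mul_assoc, hqp, zero_mul, zero_mul]

theorem add_mul_add (hp : IsGroupInv p u) (hq : IsGroupInv q v) (hpq : p * q = 0)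
    (hqp : q * p = 0) : (p + q) * (u + v) = p * u + q * v := by
  rw [add_mul, mul_add, mul_add, hq.mul_inv_eq_zero hpq, hp.mul_inv_eq_zero hqp]
  abel

theorem add (hp : IsGroupInv p u) (hq : IsGroupInv q v) (hpq : p * q = 0)
    (hqp : q * p = 0) : IsGroupInv (p + q) (u + v) := by
  have huq := hp.inv_mul_eq_zero hpq
  have hvp := hq.inv_mul_eq_zero hqp
  have hqu := hp.mul_inv_eq_zero hqp
  have hpv := hq.mul_inv_eq_zero hpq
  have hpu : (u + v) * (p + q) = u * p + v * q := by
    rw [add_mul, mul_add, mul_add, huq, hvp]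
    abel
  refine ⟨?_, ?_, ?_⟩
  · rw [hp.add_mul_add hq hpq hqp, add_mul, mul_add, mul_add, hp.1, hq.1, mul_assoc p u q,
      huq, mul_assoc q v p, hvp, mul_zero, mul_zero, add_zero, zero_add]
  · rw [hpu, add_mul, mul_add, mul_add, hp.2.1, hq.2.1, mul_assoc u p v, hpv,
      mul_assoc v q u, hqu, mul_zero, mul_zero, add_zero, zero_add]
  · rw [hp.add_mul_add hq hpq hqp, hpu, hp.2.2, hq.2.2]

end IsGroupInv

end Ring

section StarRing

variable {R : Type*} [Ring R] [StarRing R] {a x p q : R}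

theorem IsMP.of_isGroupInv (h : IsGroupInv a x) (hs : IsSelfAdjoint (a * x)) : IsMP a x :=
  ⟨h.1, h.2.1, hs, h.2.2 ▸ hs⟩

theorem IsEP.pow (h : IsEP a) (m : ℕ) : IsEP (a ^ m) := by
  obtain ⟨x, hmp, hg⟩ := h
  have hs : IsSelfAdjoint (a ^ m * x ^ m) := by
    rw [← hg.commute.mul_pow]
    exact IsSelfAdjoint.pow hmp.2.2.1 m
  exact ⟨x ^ m, .of_isGroupInv (hg.pow m) hs, hg.pow m⟩

theorem IsEP.add (hp : IsEP p) (hq : IsEP q) (hpq : p * q = 0) (hqp : q * p = 0) :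
    IsEP (p + q) := by
  obtain ⟨u, hpmp, hpg⟩ := hp
  obtain ⟨v, hqmp, hqg⟩ := hq
  have hs : IsSelfAdjoint ((p + q) * (u + v)) := by
    rw [hpg.add_mul_add hqg hpq hqp]
    exact IsSelfAdjoint.add hpmp.2.2.1 hqmp.2.2.1
  exact ⟨u + v, .of_isGroupInv (hpg.add hqg hpq hqp) hs, hpg.add hqg hpq hqp⟩

end StarRing

variable {A : Type*} [NormedRing A] [StarRing A] [NormedAlgebra ℂ A] [CompleteSpace A]

theorem stmt3_general (a b : A) (ha : IsStarDMP a) (hb : IsStarDMP b)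
    (hab : a * b = 0) (hba : b * a = 0) :
    IsStarDMP (a + b) := by
  obtain ⟨n, hn, hEPa⟩ := ha
  obtain ⟨m, hm, hEPb⟩ := hb
  have hnm : 0 < n * m := Nat.mul_pos hn hm
  refine ⟨n * m, hnm, ?_⟩
  rw [add_pow_of_mul_eq_zero hab hba hnm]
  refine IsEP.add ?_ ?_ (pow_mul_pow_eq_zero_of_mul_eq_zero hab hnm hnm)
    (pow_mul_pow_eq_zero_of_mul_eq_zero hba hnm hnm)
  · rw [pow_mul]
    exact IsEP.pow hEPa m
  · rw [pow_mul']
    exact IsEP.pow hEPb n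

theorem stmt3 (a b : A) (ha : IsStarDMP a) (hb : IsStarDMP b)
    (hab : a * b = 0) (hba : b * a = 0) (hsb : star a * b = 0) :
    IsStarDMP (a + b) :=
  stmt3_general a b ha hb hab hba
end

section
/- Let A be a complex Banach *-algebra with identity, and let a, b ∈ A be *-DMP elements. If ab = ba and a^π a* b = a^π b a* (where a^π = 1 − a a^D), then a + b is *-DMP if and only if (a+b) a a^D is *-DMP. -/
/-! An element `a` is *-DMP iff it has a Drazin inverse `x` with `a x` self-adjoint. A Drazin
inverse lies in the bicommutant of its element, and the bicommutant of the commuting pair `{a, b}`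
is a commutative ring, so all the algebra can be done in a commutative ring.

Put `p = a aᴰ`; it is a self-adjoint idempotent because `a` is *-DMP. Multiplying by a commuting
projection keeps the *-DMP property, which gives one direction. For the other, split `a + b` into
the orthogonal pieces `(a + b) p` and `(a + b)(1 - p) = b (1 - p) + a (1 - p)`. The second piece is
a Drazin invertible element plus a commuting nilpotent, so it is Drazin invertible with spectral
idempotent `b bᴰ (1 - p)`, which is self-adjoint. Drazin inverses of orthogonal commuting elements
add, and so do their spectral idempotents. -/

section Ring
variable {R : Type*} [Ring R] {a b c g x : R}

theorem IsGroupInv.isDrazin (h : IsGroupInv a x) : IsDrazin a x := by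
  obtain ⟨h1, h2, h3⟩ := h
  refine ⟨1, ?_, ?_, h3⟩
  · rw [pow_two, pow_one, ← mul_assoc, ← h3, h1]
  · rw [pow_two, ← mul_assoc, h3, h2]

theorem IsGroupInv.commute_mul (h : IsGroupInv b g) (hc : Commute c b) : Commute c (b * g) := by
  obtain ⟨hbgb, -, hbg⟩ := h
  calc c * (b * g) = b * g * b * c * g := by rw [← mul_assoc, hc.eq, hbgb]
    _ = b * g * c * (b * g) := by rw [mul_assoc (b * g) b, ← hc.eq]; simp only [mul_assoc]
    _ = g * b * c * (g * b) := by rw [hbg]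
    _ = g * c * (b * g * b) := by rw [mul_assoc g b c, ← hc.eq]; simp only [mul_assoc]
    _ = b * g * c := by rw [hbgb, mul_assoc, hc.eq, ← mul_assoc, hbg]

theorem IsDrazin.isIdempotentElem_mul (h : IsDrazin a x) : IsIdempotentElem (a * x) := by
  obtain ⟨-, -, hx, hax⟩ := h
  rw [IsIdempotentElem, mul_assoc, ← mul_assoc x, ← hax, mul_assoc, ← pow_two, hx]

theorem IsDrazin.exists_isGroupInv_pow (h : IsDrazin a x) :
    ∃ n, 1 ≤ n ∧ IsGroupInv (a ^ n) (x ^ n) ∧ a ^ n * x ^ n = a * x := by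
  have he := h.isIdempotentElem_mul
  obtain ⟨k, hk, hx, hax⟩ := h
  have hax : Commute a x := hax
  have hpow : a ^ (k + 1) * x ^ (k + 1) = a * x := by rw [← hax.mul_pow, he.pow_succ_eq]
  refine ⟨k + 1, k.succ_pos, ⟨?_, ?_, ?_⟩, hpow⟩
  · rw [hpow, mul_assoc, hk, pow_succ']
  · rw [← (hax.pow_pow _ _).eq, hpow, pow_succ', ← mul_assoc, mul_assoc a, ← pow_two, hx]
  · rw [hpow, ← hax.symm.mul_pow, ← hax.eq, he.pow_succ_eq]

theorem IsDrazin.commute (h : IsDrazin a x) (hc : Commute c a) : Commute c x := by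
  obtain ⟨n, -, hg, hpow⟩ := h.exists_isGroupInv_pow
  have hce : Commute c (a * x) := hpow ▸ hg.commute_mul (hc.pow_right n)
  obtain ⟨-, -, hx, hax⟩ := h
  have hxax : x * (a * x) = x := by rw [← mul_assoc, ← hax, mul_assoc, ← pow_two, hx]
  calc c * x = a * x * c * x := by rw [← hce.eq, mul_assoc, mul_assoc, ← pow_two, hx]
    _ = x * (a * c) * x := by rw [hax]; simp only [mul_assoc]
    _ = x * c * (a * x) := by rw [← hc.eq]; simp only [mul_assoc]
    _ = x * c := by rw [mul_assoc, hce.eq, ← mul_assoc, hxax]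

end Ring

section CommRing
variable {R : Type*} [CommRing R] {a b x y : R}

-- `a - a ^ 2 * x = a * (1 - a * x)` is the nilpotent part of the core–nilpotent decomposition.
theorem isDrazin_iff : IsDrazin a x ↔ a * x ^ 2 = x ∧ IsNilpotent (a - a ^ 2 * x) := by
  have key : ∀ n : ℕ, a * x ^ 2 = x → (a - a ^ 2 * x) ^ (n + 1) = a ^ (n + 1) - x * a ^ (n + 2) :=
    fun n hx => by
      have he : IsIdempotentElem (1 - a * x) := IsIdempotentElem.one_sub <| by
        rw [IsIdempotentElem]; linear_combination a * hx
      rw [show a - a ^ 2 * x = a * (1 - a * x) by ring, mul_pow, he.pow_succ_eq]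
      ring
  constructor
  · rintro ⟨k, hk, hx, -⟩
    refine ⟨hx, k + 1, ?_⟩
    rw [key k hx]
    linear_combination (-a) * hk
  · rintro ⟨hx, n, hn⟩
    refine ⟨n + 1, ?_, hx, mul_comm a x⟩
    have := key n hx
    rw [pow_succ, hn, zero_mul] at this
    linear_combination this

theorem IsDrazin.mul_eq_zero_of_mul_eq_zero (hy : IsDrazin b y) (hab : a * b = 0) : a * y = 0 := by
  obtain ⟨-, -, hy, -⟩ := hy
  linear_combination y ^ 2 * hab - a * hy

theorem IsDrazin.mul_mul_eq (hx : IsDrazin a x) (hy : IsDrazin a y) : a * x * (a * y) = a * x := by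
  rw [isDrazin_iff] at hx hy
  obtain ⟨n, hn⟩ := hy.2
  have he : IsIdempotentElem (a * x * (1 - a * y)) := by
    refine IsIdempotentElem.mul ?_ (IsIdempotentElem.one_sub ?_) <;> rw [IsIdempotentElem]
    · linear_combination a * hx.1
    · linear_combination a * hy.1
  have : a * x * (1 - a * y) = 0 := by
    rw [← he.pow_succ_eq n, show a * x * (1 - a * y) = x * (a - a ^ 2 * y) by ring, mul_pow,
      pow_succ (a - a ^ 2 * y), hn, zero_mul, mul_zero]
  linear_combination -this

theorem IsDrazin.mul_eq_mul (hx : IsDrazin a x) (hy : IsDrazin a y) : a * x = a * y := by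
  rw [← hx.mul_mul_eq hy, mul_comm, hy.mul_mul_eq hx]

theorem IsDrazin.of_pow {n : ℕ} (h : IsDrazin (a ^ (n + 1)) x) : IsDrazin a (a ^ n * x) := by
  rw [isDrazin_iff] at h ⊢
  obtain ⟨hx, hnil⟩ := h
  refine ⟨by linear_combination a ^ n * hx, IsNilpotent.of_pow (m := n + 1) ?_⟩
  have he : IsIdempotentElem (1 - a ^ (n + 1) * x) := IsIdempotentElem.one_sub <| by
    rw [IsIdempotentElem]; linear_combination a ^ (n + 1) * hx
  rwa [show a - a ^ 2 * (a ^ n * x) = a * (1 - a ^ (n + 1) * x) by ring, mul_pow,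
    he.pow_succ_eq, show a ^ (n + 1) * (1 - a ^ (n + 1) * x) = a ^ (n + 1) - (a ^ (n + 1)) ^ 2 * x
      by ring]

theorem IsDrazin.mul_of_isIdempotentElem {p : R} (h : IsDrazin a x) (hp : IsIdempotentElem p) :
    IsDrazin (a * p) (x * p) := by
  rw [isDrazin_iff] at h ⊢
  refine ⟨by linear_combination p ^ 3 * h.1 + (x * p + x) * hp.eq, ?_⟩
  rw [show a * p - (a * p) ^ 2 * (x * p) = (a - a ^ 2 * x) * p by
    linear_combination (-(a ^ 2 * x * (p + 1))) * hp.eq]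
  exact (Commute.all _ _).isNilpotent_mul_right h.2

theorem IsDrazin.add_of_mul_eq_zero (hx : IsDrazin a x) (hy : IsDrazin b y) (hab : a * b = 0) :
    IsDrazin (a + b) (x + y) := by
  have hay := hy.mul_eq_zero_of_mul_eq_zero hab
  have hbx := hx.mul_eq_zero_of_mul_eq_zero (by rw [mul_comm, hab])
  rw [isDrazin_iff] at hx hy ⊢
  refine ⟨by linear_combination hx.1 + hy.1 + (2 * x + y) * hay + (x + 2 * y) * hbx, ?_⟩
  rw [show a + b - (a + b) ^ 2 * (x + y) = (a - a ^ 2 * x) + (b - b ^ 2 * y) by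
    linear_combination (-(2 * (x + y))) * hab - a * hay - b * hbx]
  exact (Commute.all _ _).isNilpotent_add hx.2 hy.2

theorem IsDrazin.exists_add_of_isNilpotent {n : R} (h : IsDrazin a x) (hn : IsNilpotent n) :
    ∃ y, IsDrazin (a + n) y ∧ (a + n) * y = a * x := by
  rw [isDrazin_iff] at h
  have hnx : IsNilpotent (n * x) := (Commute.all _ _).isNilpotent_mul_right hn
  obtain ⟨u, hu⟩ := hnx.isUnit_one_add
  have hux := u.mul_inv
  have heq : (a + n) * (x * ↑u⁻¹) = a * x := by
    rw [hu] at hux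
    linear_combination (-(n * ↑u⁻¹)) * h.1 + a * x * hux
  refine ⟨x * ↑u⁻¹, ?_, heq⟩
  rw [isDrazin_iff]
  refine ⟨by linear_combination (x * ↑u⁻¹) * heq + ↑u⁻¹ * h.1, ?_⟩
  rw [show a + n - (a + n) ^ 2 * (x * ↑u⁻¹) = (a - a ^ 2 * x) + n * (1 - a * x) by
    linear_combination (-(a + n)) * heq]
  exact (Commute.all _ _).isNilpotent_add h.2 ((Commute.all _ _).isNilpotent_mul_right hn)

theorem IsDrazin.exists_add {aD bD xu : R} (ha : IsDrazin a aD) (hb : IsDrazin b bD)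
    (hu : IsDrazin ((a + b) * (a * aD)) xu) :
    ∃ x, IsDrazin (a + b) x ∧ (a + b) * x = (a + b) * (a * aD) * xu + b * bD * (1 - a * aD) := by
  rw [isDrazin_iff] at ha
  have hp : IsIdempotentElem (a * aD) := by rw [IsIdempotentElem]; linear_combination a * ha.1
  have hnil : IsNilpotent (a * (1 - a * aD)) := by
    rw [show a * (1 - a * aD) = a - a ^ 2 * aD by ring]; exact ha.2
  obtain ⟨y, hy, hvy⟩ := (hb.mul_of_isIdempotentElem hp.one_sub).exists_add_of_isNilpotent hnil
  have huv : (a + b) * (a * aD) * (b * (1 - a * aD) + a * (1 - a * aD)) = 0 := by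
    linear_combination (-((a + b) ^ 2)) * hp.eq
  have huy := hy.mul_eq_zero_of_mul_eq_zero huv
  have hvxu := hu.mul_eq_zero_of_mul_eq_zero (by rw [mul_comm, huv])
  refine ⟨xu + y, ?_, ?_⟩
  · convert hu.add_of_mul_eq_zero hy huv using 1
    ring
  · linear_combination huy + hvxu + hvy + b * bD * hp.one_sub.eq

end CommRing

section Bicommutant
variable {R : Type*} [Ring R] {S : Set R} {a g x : R}

theorem IsDrazin.mem_centralizer_centralizer (h : IsDrazin a x)
    (ha : a ∈ S.centralizer.centralizer) : x ∈ S.centralizer.centralizer :=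
  fun c hc => (h.commute (ha c hc)).eq

theorem isMulCommutative_centralizer_centralizer (hS : ∀ x ∈ S, ∀ y ∈ S, x * y = y * x) :
    IsMulCommutative (Subring.centralizer S.centralizer) :=
  ⟨⟨fun x y => Subtype.ext (Set.centralizer_centralizer_comm_of_comm hS _ x.2 _ y.2)⟩⟩

theorem Subring.isDrazin_coe_iff {T : Subring R} {a x : T} : IsDrazin (a : R) x ↔ IsDrazin a x := by
  simp only [IsDrazin, ← Subring.coe_pow, ← Subring.coe_mul, SetLike.coe_eq_coe]

theorem Commute.mul_comm_of_mem_pair {b : R} (h : Commute a b) :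
    ∀ u ∈ ({a, b} : Set R), ∀ v ∈ ({a, b} : Set R), u * v = v * u := by
  simp only [Set.mem_insert_iff, Set.mem_singleton_iff]
  rintro u (rfl | rfl) v (rfl | rfl) <;> simp [h.eq]

open scoped IsMulCommutative

theorem IsGroupInv.isDrazin_pow_mul_s8 {n : ℕ} (h : IsGroupInv (a ^ (n + 1)) g) :
    IsDrazin a (a ^ n * g) := by
  let C := Subring.centralizer (Set.centralizer {a})
  have : IsMulCommutative C := isMulCommutative_centralizer_centralizer (by simp)
  have ha : a ∈ C := Set.subset_centralizer_centralizer rfl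
  have hg := h.isDrazin.mem_centralizer_centralizer (pow_mem ha _)
  exact Subring.isDrazin_coe_iff.2
    (IsDrazin.of_pow (a := (⟨a, ha⟩ : C)) (x := ⟨g, hg⟩) (Subring.isDrazin_coe_iff.1 h.isDrazin))

end Bicommutant

section StarRing
variable {R : Type*} [Ring R] [StarRing R] {a b p s x aD : R}

open scoped IsMulCommutative

theorem IsStarDMP.isSelfAdjoint_mul (ha : IsStarDMP a) (hx : IsDrazin a x) :
    IsSelfAdjoint (a * x) := by
  obtain ⟨_ | n, hn, g, hMP, hG⟩ := ha
  · exact absurd hn (by norm_num)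
  let C := Subring.centralizer (Set.centralizer {a})
  have : IsMulCommutative C := isMulCommutative_centralizer_centralizer (by simp)
  have ha : a ∈ C := Set.subset_centralizer_centralizer rfl
  have hy := hG.isDrazin_pow_mul_s8
  have hxy := IsDrazin.mul_eq_mul (a := (⟨a, ha⟩ : C))
    (x := ⟨x, hx.mem_centralizer_centralizer ha⟩) (y := ⟨_, hy.mem_centralizer_centralizer ha⟩)
    (Subring.isDrazin_coe_iff.1 hx) (Subring.isDrazin_coe_iff.1 hy)
  rw [← Subtype.coe_inj] at hxy
  simp only [Subring.coe_mul] at hxy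
  rw [hxy, ← mul_assoc, ← pow_succ']
  exact hMP.2.2.1

theorem isStarDMP_iff : IsStarDMP a ↔ ∃ x, IsDrazin a x ∧ IsSelfAdjoint (a * x) := by
  constructor
  · intro ha
    obtain ⟨_ | n, hn, g, -, hG⟩ := id ha
    · exact absurd hn (by norm_num)
    exact ⟨_, hG.isDrazin_pow_mul_s8, ha.isSelfAdjoint_mul hG.isDrazin_pow_mul_s8⟩
  · rintro ⟨x, hx, hsa⟩
    obtain ⟨n, hn, hG, hpow⟩ := hx.exists_isGroupInv_pow
    rw [← hpow] at hsa
    exact ⟨n, hn, x ^ n, ⟨hG.1, hG.2.1, hsa.star_eq, by rw [← hG.2.2]; exact hsa.star_eq⟩, hG⟩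

theorem IsStarDMP.mul_of_commute (hs : IsStarDMP s) (hp : IsStarProjection p) (hsp : Commute s p) :
    IsStarDMP (s * p) := by
  obtain ⟨x, hx, hsx⟩ := isStarDMP_iff.1 hs
  let C := Subring.centralizer (Set.centralizer {s, p})
  have : IsMulCommutative C := isMulCommutative_centralizer_centralizer hsp.mul_comm_of_mem_pair
  have hsC : s ∈ C := Set.subset_centralizer_centralizer (by simp)
  have hpC : p ∈ C := Set.subset_centralizer_centralizer (by simp)
  have hxC := hx.mem_centralizer_centralizer hsC
  have hpx : Commute p x := hx.commute hsp.symm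
  refine isStarDMP_iff.2 ⟨x * p, ?_, ?_⟩
  · exact Subring.isDrazin_coe_iff.2 (IsDrazin.mul_of_isIdempotentElem (a := (⟨s, hsC⟩ : C))
      (x := ⟨x, hxC⟩) (p := ⟨p, hpC⟩) (Subring.isDrazin_coe_iff.1 hx)
      (Subtype.ext hp.isIdempotentElem.eq))
  · rw [mul_assoc, ← mul_assoc p, hpx.eq, mul_assoc, hp.isIdempotentElem.eq, ← mul_assoc]
    exact (hsx.commute_iff hp.isSelfAdjoint).1 (hsp.mul_left hpx.symm)

theorem Commute.isStarDMP_add (hab : Commute a b) (ha : IsStarDMP a) (hb : IsStarDMP b)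
    (haD : IsDrazin a aD) (h : IsStarDMP ((a + b) * (a * aD))) : IsStarDMP (a + b) := by
  obtain ⟨bD, hbD, hbsa⟩ := isStarDMP_iff.1 hb
  obtain ⟨xu, hxu, husa⟩ := isStarDMP_iff.1 h
  let C := Subring.centralizer (Set.centralizer {a, b})
  have : IsMulCommutative C := isMulCommutative_centralizer_centralizer hab.mul_comm_of_mem_pair
  have haC : a ∈ C := Set.subset_centralizer_centralizer (by simp)
  have hbC : b ∈ C := Set.subset_centralizer_centralizer (by simp)
  have haDC := haD.mem_centralizer_centralizer haC
  have hbDC := hbD.mem_centralizer_centralizer hbC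
  have hxuC := hxu.mem_centralizer_centralizer (C.mul_mem (C.add_mem haC hbC) (C.mul_mem haC haDC))
  obtain ⟨x, hx, hsx⟩ := IsDrazin.exists_add (a := (⟨a, haC⟩ : C)) (b := ⟨b, hbC⟩)
    (aD := ⟨aD, haDC⟩) (bD := ⟨bD, hbDC⟩) (xu := ⟨xu, hxuC⟩) (Subring.isDrazin_coe_iff.1 haD)
    (Subring.isDrazin_coe_iff.1 hbD) (Subring.isDrazin_coe_iff.1 hxu)
  refine isStarDMP_iff.2 ⟨x, Subring.isDrazin_coe_iff.2 hx, ?_⟩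
  have hsx := congrArg Subtype.val hsx
  simp only [MulMemClass.coe_mul, AddMemClass.coe_add, AddSubgroupClass.coe_sub,
    OneMemClass.coe_one] at hsx
  rw [hsx]
  have hpq : Commute (b * bD) (a * aD) :=
    Set.centralizer_centralizer_comm_of_comm hab.mul_comm_of_mem_pair _ (C.mul_mem hbC hbDC) _
      (C.mul_mem haC haDC)
  refine husa.add ((hbsa.commute_iff ((IsSelfAdjoint.one R).sub (ha.isSelfAdjoint_mul haD))).1 ?_)
  exact (Commute.one_right _).sub_right hpq

end StarRing

variable {A : Type*} [NormedRing A] [StarRing A] [NormedAlgebra ℂ A] [CompleteSpace A]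

theorem stmt8_general (a b aD : A) (ha : IsStarDMP a) (hb : IsStarDMP b)
    (haD : IsDrazin a aD)
    (hab : a * b = b * a) :
    IsStarDMP (a + b) ↔ IsStarDMP ((a + b) * (a * aD)) := by
  have hp : IsStarProjection (a * aD) := ⟨haD.isIdempotentElem_mul, ha.isSelfAdjoint_mul haD⟩
  have hsp : Commute (a + b) (a * aD) :=
    ((Commute.refl a).add_left hab.symm).mul_right
      ((haD.commute (Commute.refl a)).add_left (haD.commute hab.symm))
  exact ⟨fun h => h.mul_of_commute hp hsp, Commute.isStarDMP_add hab ha hb haD⟩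

theorem stmt8 (a b aD : A) (ha : IsStarDMP a) (hb : IsStarDMP b)
    (haD : IsDrazin a aD)
    (hab : a * b = b * a)
    (h2 : (1 - a * aD) * (star a * b) = (1 - a * aD) * (b * star a)) :
    IsStarDMP (a + b) ↔ IsStarDMP ((a + b) * (a * aD)) :=
  stmt8_general a b aD ha hb haD hab
end

section
/- Let A be a complex Banach *-algebra with identity, and let a, b ∈ A be Drazin invertible with ab = ba. If 1 + a^D b is Drazin invertible, then a + b is Drazin invertible and the spectral idempotent satisfies (a+b)^π = a a^D (1 + a^D b)^π + a^π b^π. -/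
variable {A : Type*} [NormedRing A] [StarRing A] [NormedAlgebra ℂ A] [CompleteSpace A]

/-! In a commutative ring, `x` is a Drazin inverse of `a` exactly when `a x² = x` and
`(1 - a x) a` is nilpotent. Put `p = a aᴰ` and `w = 1 + aᴰ b`. On the range of `p`,
`p (a + b) = a p w` has Drazin inverse `aᴰ c`; on the range of `1 - p`, `a + b` is
`(1 - p) b` plus the nilpotent `(1 - p) a`, with Drazin inverse `(1 - p) bᴰ (1 + (1 - p) a bᴰ)⁻¹`.
The sum `s` of the two satisfies `(a + b) s = p w c + (1 - p) b bᴰ`, which gives the formula.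
The noncommutative case reduces to this one: a Drazin inverse commutes with everything
commuting with its element, so all five elements lie in the bicommutant of `{a, b}`,
a commutative subring. -/

section CommRing

variable {R : Type*} [CommRing R]

theorem isDrazin_iff_isNilpotent {a x : R} :
    IsDrazin a x ↔ a * x ^ 2 = x ∧ IsNilpotent ((1 - a * x) * a) := by
  have hidem : a * x ^ 2 = x → IsIdempotentElem (1 - a * x) := fun hx2 ↦
    IsIdempotentElem.one_sub (by rw [IsIdempotentElem]; linear_combination a * hx2)
  constructor
  · rintro ⟨k, hk, hx2, -⟩
    refine ⟨hx2, k + 1, ?_⟩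
    rw [mul_pow, (hidem hx2).pow_succ_eq]
    linear_combination (-a) * hk
  · rintro ⟨hx2, K, hK⟩
    have hK' : ((1 - a * x) * a) ^ (K + 1) = 0 := pow_eq_zero_of_le K.le_succ hK
    rw [mul_pow, (hidem hx2).pow_succ_eq] at hK'
    exact ⟨K + 1, by linear_combination -hK', hx2, mul_comm a x⟩

theorem IsDrazin.exists_isDrazin_add {a b aD bD c : R} (haD : IsDrazin a aD)
    (hbD : IsDrazin b bD) (hc : IsDrazin (1 + aD * b) c) :
    ∃ s : R, IsDrazin (a + b) s ∧
      1 - (a + b) * s = a * aD * (1 - (1 + aD * b) * c) + (1 - a * aD) * (1 - b * bD) := by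
  obtain ⟨haD2, ha_nil⟩ := isDrazin_iff_isNilpotent.mp haD
  obtain ⟨hbD2, hb_nil⟩ := isDrazin_iff_isNilpotent.mp hbD
  obtain ⟨hc2, hc_nil⟩ := isDrazin_iff_isNilpotent.mp hc
  obtain ⟨u, hu⟩ := ((Commute.all _ bD).isNilpotent_mul_right ha_nil).isUnit_one_add
  have hs1 : (a + b) * (aD * c) = a * aD * ((1 + aD * b) * c) := by
    linear_combination (-(b * c)) * haD2
  have hs2 : (a + b) * ((1 - a * aD) * bD * ↑u⁻¹) = (1 - a * aD) * (b * bD) := by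
    have key : (a + b) * (1 - a * aD) * bD = (1 - a * aD) * (b * bD) * u := by
      rw [hu]; linear_combination (-(1 - a * aD) ^ 2 * a) * hbD2 - a ^ 2 * bD * haD2
    linear_combination ↑u⁻¹ * key + (1 - a * aD) * (b * bD) * u.mul_inv
  set s := aD * c + (1 - a * aD) * bD * ↑u⁻¹
  have hformula : 1 - (a + b) * s =
      a * aD * (1 - (1 + aD * b) * c) + (1 - a * aD) * (1 - b * bD) := by
    linear_combination -hs1 - hs2
  refine ⟨s, isDrazin_iff_isNilpotent.mpr ⟨?_, ?_⟩, hformula⟩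
  · linear_combination s * (hs1 + hs2) +
      ((1 + aD * b) * c ^ 2 - a * (1 + aD * b) * c * bD * ↑u⁻¹ - b * bD * c + a * bD * ↑u⁻¹) *
        haD2 + (1 - a * aD) ^ 2 * ↑u⁻¹ * hbD2 + aD * hc2
  · have hsplit : (1 - (a + b) * s) * (a + b) =
        a * (a * aD) * ((1 - (1 + aD * b) * c) * (1 + aD * b)) +
          (1 - b * bD) * b * (1 - a * aD) + (1 - a * aD) * a * (1 - b * bD) := by
      rw [hformula]; linear_combination (-(1 - (1 + aD * b) * c) * a * b) * haD2
    rw [hsplit]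
    refine (Commute.all _ _).isNilpotent_add ((Commute.all _ _).isNilpotent_add ?_ ?_) ?_
    · exact (Commute.all _ _).isNilpotent_mul_left hc_nil
    · exact (Commute.all _ _).isNilpotent_mul_right hb_nil
    · exact (Commute.all _ _).isNilpotent_mul_right ha_nil

end CommRing

section Ring

variable {R : Type*} [Ring R]

theorem IsDrazin.commute_of_commute {a x u : R} (h : IsDrazin a x) (hu : Commute u a) :
    Commute u x := by
  obtain ⟨k, hk, hx2, hax⟩ := h
  have hax : Commute a x := hax
  have hxp : x * (a * x) = x := by rw [← mul_assoc, ← hax.eq, mul_assoc, ← sq, hx2]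
  have hxpow : ∀ n : ℕ, x * (a * x) ^ n = x := by
    intro n
    induction n with
    | zero => rw [pow_zero, mul_one]
    | succ n ih => rw [pow_succ, ← mul_assoc, ih, hxp]
  have hx_left : x ^ (k + 1) * a ^ k = x := by
    rw [pow_succ', mul_assoc, ← hax.symm.mul_pow, ← hax.eq, hxpow]
  have hx_right : a ^ k * x ^ (k + 1) = x := (hax.pow_pow k (k + 1)).eq.trans hx_left
  have hak : a ^ k * (1 - a * x) = 0 := by
    rw [mul_sub, mul_one, ← mul_assoc, ← pow_succ, (hax.pow_left (k + 1)).eq, hk, sub_self]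
  have hka : (1 - a * x) * a ^ k = 0 := by
    have hcomm : Commute (1 - a * x) a :=
      (Commute.one_left a).sub_left ((Commute.refl a).mul_right hax).symm
    rw [(hcomm.pow_right k).eq, hak]
  -- `x = x ^ (k + 1) * a ^ k` and `a ^ k * (1 - a * x) = 0` give `x * u = x * u * a * x`,
  -- and symmetrically `u * x = a * x * u * x`; the two right-hand sides agree.
  have hxu : x * u * (1 - a * x) = 0 :=
    calc x * u * (1 - a * x) = x ^ (k + 1) * (a ^ k * u) * (1 - a * x) := by
          rw [← mul_assoc, hx_left]
      _ = x ^ (k + 1) * u * (a ^ k * (1 - a * x)) := by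
          rw [← (hu.pow_right k).eq]; simp only [mul_assoc]
      _ = 0 := by rw [hak, mul_zero]
  have hux : (1 - a * x) * u * x = 0 :=
    calc (1 - a * x) * u * x = (1 - a * x) * (u * a ^ k) * x ^ (k + 1) := by
          rw [mul_assoc _ u, mul_assoc, mul_assoc, hx_right]
      _ = (1 - a * x) * a ^ k * (u * x ^ (k + 1)) := by
          rw [(hu.pow_right k).eq]; simp only [mul_assoc]
      _ = 0 := by rw [hka, zero_mul]
  rw [mul_sub, mul_one, sub_eq_zero] at hxu
  rw [sub_mul, sub_mul, one_mul, sub_eq_zero] at hux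
  calc u * x = a * x * u * x := hux
    _ = x * (a * u) * x := by rw [hax.eq]; simp only [mul_assoc]
    _ = x * u * (a * x) := by rw [← hu.eq]; simp only [mul_assoc]
    _ = x * u := hxu.symm

theorem IsDrazin.mem_centralizer {S : Set R} {a x : R} (h : IsDrazin a x)
    (ha : a ∈ S.centralizer) : x ∈ S.centralizer :=
  fun m hm ↦ (h.commute_of_commute (ha m hm)).eq

theorem IsDrazin.map_iff {S F : Type*} [Ring S] [FunLike F R S] [RingHomClass F R S] {f : F}
    (hf : Function.Injective f) {a x : R} : IsDrazin (f a) (f x) ↔ IsDrazin a x := by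
  simp only [IsDrazin, ← map_pow, ← map_mul, hf.eq_iff]

open scoped IsMulCommutative in
theorem IsDrazin.exists_isDrazin_add_of_commute {a b aD bD c : R} (hab : Commute a b)
    (haD : IsDrazin a aD) (hbD : IsDrazin b bD) (hc : IsDrazin (1 + aD * b) c) :
    ∃ s : R, IsDrazin (a + b) s ∧
      1 - (a + b) * s = a * aD * (1 - (1 + aD * b) * c) + (1 - a * aD) * (1 - b * bD) := by
  let T := Subring.centralizer (Set.centralizer {a, b})
  have : IsMulCommutative T := by
    refine .of_setLike_mul_comm fun _ hx _ hy ↦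
      Set.centralizer_centralizer_comm_of_comm ?_ _ hx _ hy
    simp only [Set.mem_insert_iff, Set.mem_singleton_iff]
    rintro x (rfl | rfl) y (rfl | rfl) <;> simp [hab.eq]
  have ha : a ∈ T := Set.subset_centralizer_centralizer (by simp)
  have hb : b ∈ T := Set.subset_centralizer_centralizer (by simp)
  have haD' : aD ∈ T := haD.mem_centralizer ha
  have hbD' : bD ∈ T := hbD.mem_centralizer hb
  have hc' : c ∈ T := hc.mem_centralizer (T.add_mem T.one_mem (T.mul_mem haD' hb))
  have hT : Function.Injective T.subtype := Subtype.val_injective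
  obtain ⟨s, hs, hformula⟩ := IsDrazin.exists_isDrazin_add (a := (⟨a, ha⟩ : T)) (b := ⟨b, hb⟩)
    (aD := ⟨aD, haD'⟩) (bD := ⟨bD, hbD'⟩) (c := ⟨c, hc'⟩) ((IsDrazin.map_iff hT).mp haD)
    ((IsDrazin.map_iff hT).mp hbD) ((IsDrazin.map_iff hT).mp hc)
  exact ⟨s, (IsDrazin.map_iff hT).mpr hs, congrArg Subtype.val hformula⟩

end Ring

theorem stmt10 (a b aD bD c : A)
    (haD : IsDrazin a aD) (hbD : IsDrazin b bD)
    (hab : a * b = b * a)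
    (hc : IsDrazin (1 + aD * b) c) :
    ∃ s : A, IsDrazin (a + b) s ∧
      1 - (a + b) * s =
        a * aD * (1 - (1 + aD * b) * c) + (1 - a * aD) * (1 - b * bD) :=
  haD.exists_isDrazin_add_of_commute hab hbD hc
end

section
/- Let A be a complex Banach *-algebra with identity. If a ∈ A is *-DMP, then a² is *-DMP; conversely (as used in Lemma 4.1), if a² is *-DMP then a is *-DMP. -/
variable {A : Type*} [NormedRing A] [StarRing A] [NormedAlgebra ℂ A] [CompleteSpace A]

section

variable {R : Type*} [Ring R] [StarRing R]

/-- Since `b` and `x` commute, `b ^ n x ^ n = x ^ n b ^ n = (b x) ^ n = b x`, and the idempotent `b x`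
fixes both `b ^ n` and `x ^ n`. -/
theorem IsMP.pow_of_isGroupInv {b x : R} (hm : IsMP b x) (hg : IsGroupInv b x) {n : ℕ}
    (hn : n ≠ 0) : IsMP (b ^ n) (x ^ n) ∧ IsGroupInv (b ^ n) (x ^ n) := by
  obtain ⟨hbxb, hxbx, hstar, -⟩ := hm
  obtain ⟨-, -, hcomm⟩ := hg
  obtain ⟨m, rfl⟩ := Nat.exists_eq_succ_of_ne_zero hn
  have hidem : IsIdempotentElem (b * x) := by
    rw [IsIdempotentElem, ← mul_assoc, hbxb]
  have hbx : b ^ (m + 1) * x ^ (m + 1) = b * x := by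
    rw [← Commute.mul_pow (show Commute b x from hcomm), hidem.pow_succ_eq]
  have hxb : x ^ (m + 1) * b ^ (m + 1) = b * x := by
    rw [← Commute.mul_pow (show Commute x b from hcomm.symm), ← hcomm, hidem.pow_succ_eq]
  have hb : b * x * b ^ (m + 1) = b ^ (m + 1) := by
    rw [pow_succ', ← mul_assoc, hbxb]
  have hx : b * x * x ^ (m + 1) = x ^ (m + 1) := by
    rw [pow_succ', ← mul_assoc, hcomm, hxbx]
  refine ⟨⟨?_, ?_, ?_, ?_⟩, ?_, ?_, ?_⟩ <;>
    simp only [hbx, hxb, hb, hx, hstar]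

theorem IsEP.pow_s12 {b : R} (h : IsEP b) {n : ℕ} (hn : n ≠ 0) : IsEP (b ^ n) :=
  let ⟨x, hm, hg⟩ := h
  ⟨x ^ n, hm.pow_of_isGroupInv hg hn⟩

theorem isStarDMP_iff_exists_isEP {a : R} : IsStarDMP a ↔ ∃ n, 1 ≤ n ∧ IsEP (a ^ n) :=
  Iff.rfl

theorem IsStarDMP.pow_s12 {a : R} (h : IsStarDMP a) {k : ℕ} (hk : k ≠ 0) : IsStarDMP (a ^ k) := by
  obtain ⟨n, hn, hep⟩ := isStarDMP_iff_exists_isEP.mp h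
  refine isStarDMP_iff_exists_isEP.mpr ⟨n, hn, ?_⟩
  rw [← pow_mul, mul_comm, pow_mul]
  exact hep.pow_s12 hk

theorem IsStarDMP.of_pow {a : R} {k : ℕ} (hk : k ≠ 0) (h : IsStarDMP (a ^ k)) : IsStarDMP a := by
  obtain ⟨n, hn, hep⟩ := isStarDMP_iff_exists_isEP.mp h
  rw [← pow_mul] at hep
  exact isStarDMP_iff_exists_isEP.mpr ⟨k * n, Nat.one_le_iff_ne_zero.mpr (by positivity), hep⟩

end

theorem stmt12 (a : A) : IsStarDMP a ↔ IsStarDMP (a ^ 2) :=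
  ⟨fun h => h.pow_s12 two_ne_zero, IsStarDMP.of_pow two_ne_zero⟩
end
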